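/- arXiv:2212.10931 — 9 statements merged into one kernel-verified Lean document; each statement's English description precedes it below -/
import Mathlib

section
/- Relational model property for Kleene algebra (Pratt): let e and f be regular expressions over an alphabet α. If for every type X and every map h : α → (X → X → Prop) the relational interpretations of e and f coincide (ĥ_rel e = ĥ_rel f), then for every Kleene algebra K and every map h : α → K, ĥ e = ĥ f. -/
/-- Homomorphic extension of `h : α → K` to regular expressions. -/
def interp {α : Type*} {K : Type*} [KleeneAlgebra K] (h : α → K) :
    RegularExpression α → K
  | .zero => 0
  | .epsilon => 1
  | .char a => h a
  | .plus e f => interp h e + interp h f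
  | .comp e f => interp h e * interp h f
  | .star e => KStar.kstar (interp h e)

/-- Relational interpretation of regular expressions. -/
def rinterp {α X : Type*} (h : α → X → X → Prop) :
    RegularExpression α → X → X → Prop
  | .zero => fun _ _ => False
  | .epsilon => fun x y => x = y
  | .char a => h a
  | .plus e f => fun x y => rinterp h e x y ∨ rinterp h f x y
  | .comp e f => fun x z => ∃ y, rinterp h e x y ∧ rinterp h f y z
  | .star e => Relation.ReflTransGen (rinterp h e)

/-!
A word `w` is itself a relational model: on positions `i : ℕ`, the letter `a` leads from `i` to
`j` when `w.drop i = a :: w.drop j`. There the relational value of `e` relates `0` to `|w|`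
exactly when `w ∈ L(e)`, so equal relational interpretations force `L(e) = L(f)`.

What remains is Kozen's completeness theorem: `L(e) ⊆ L(f)` implies `ĥ e ≤ ĥ f` in every Kleene
algebra. Sets `S` of Antimirov partial derivatives of `f` form a finite deterministic automaton.
The value `Σ_{d ∈ S} ĥ d` of a state can only drop along a transition, since `h a * ĥ d ≤ ĥ g`
for a partial derivative `d` of `g` by `a`, and it is `≥ 1` at every state reached from `{f}` by
a word of `L(e)`. Let `P` be the reflexive-transitive closure of the transition matrix, computed
by Kleene's elimination. By induction on `e`, `ĥ e` is at most the sum of the entries `P {f} S`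
over the states `S` reached by words of `L(e)`, and each such entry is at most
`P {f} S * value S ≤ value {f} = ĥ f`.
-/

open Computability RegularExpression

section

variable {α K : Type*} [KleeneAlgebra K]

section PathRel

variable {X : Type*}

def pathRel (h : α → X → X → Prop) : List α → X → X → Prop
  | [] => Eq
  | a :: w => fun x z => ∃ y, h a x y ∧ pathRel h w y z

variable {h : α → X → X → Prop}

theorem pathRel_append {u v : List α} {x z : X} :
    pathRel h (u ++ v) x z ↔ ∃ y, pathRel h u x y ∧ pathRel h v y z := by
  induction u generalizing x with
  | nil => simp [pathRel]
  | cons a u ih => simp only [List.cons_append, pathRel, ih]; aesop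

theorem reflTransGen_iff_exists_pathRel {R : X → X → Prop} {L : Language α}
    (hR : ∀ x y, R x y ↔ ∃ w ∈ L, pathRel h w x y) {x y : X} :
    Relation.ReflTransGen R x y ↔ ∃ w ∈ L∗, pathRel h w x y := by
  constructor
  · intro hxy
    induction hxy with
    | refl => exact ⟨[], Language.nil_mem_kstar L, rfl⟩
    | tail _ hzy ih =>
      obtain ⟨u, hu, hxz⟩ := ih
      obtain ⟨v, hv, hzy⟩ := (hR _ _).1 hzy
      exact ⟨u ++ v, kstar_mul_le_kstar (a := L) (Language.append_mem_mul hu hv),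
        pathRel_append.2 ⟨_, hxz, hzy⟩⟩
  · rintro ⟨_, hw, hxy⟩
    obtain ⟨S, rfl, hS⟩ := Language.mem_kstar.1 hw
    clear hw
    induction S generalizing x with
    | nil => exact hxy ▸ Relation.ReflTransGen.refl
    | cons u S ih =>
      obtain ⟨z, hxz, hzy⟩ := pathRel_append.1 hxy
      exact .head ((hR _ _).2 ⟨u, hS u List.mem_cons_self, hxz⟩)
        (ih (fun v hv => hS v (List.mem_cons_of_mem _ hv)) hzy)

theorem rinterp_iff_exists_pathRel (e : RegularExpression α) {x y : X} :
    rinterp h e x y ↔ ∃ w ∈ e.matches', pathRel h w x y := by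
  induction e generalizing x y with
  | zero => exact iff_of_false id fun ⟨w, hw, _⟩ => Language.notMem_zero w hw
  | epsilon =>
    refine ⟨fun hxy => ⟨[], Language.nil_mem_one, hxy⟩, fun ⟨w, hw, hxy⟩ => ?_⟩
    rw [(Language.mem_one w).1 hw] at hxy
    exact hxy
  | char a =>
    refine ⟨fun hxy => ⟨[a], rfl, y, hxy, rfl⟩, fun ⟨w, hw, hxy⟩ => ?_⟩
    obtain ⟨z, hxz, rfl⟩ := (hw : w = [a]) ▸ hxy
    exact hxz
  | plus s t ihs iht =>
    simp only [rinterp, ihs, iht, matches', Language.mem_add, or_and_right, exists_or]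
  | comp s t ihs iht =>
    simp only [rinterp, ihs, iht]
    constructor
    · rintro ⟨z, ⟨u, hu, hxz⟩, v, hv, hzy⟩
      exact ⟨u ++ v, Language.append_mem_mul hu hv, pathRel_append.2 ⟨z, hxz, hzy⟩⟩
    · rintro ⟨_, hw, hxy⟩
      obtain ⟨u, hu, v, hv, rfl⟩ := Language.mem_mul.1 hw
      obtain ⟨z, hxz, hzy⟩ := pathRel_append.1 hxy
      exact ⟨z, ⟨u, hu, hxz⟩, v, hv, hzy⟩
  | star s ih => exact reflTransGen_iff_exists_pathRel fun _ _ => ih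

end PathRel

section WordModel

universe v

-- Lifted so that the model lives in whichever universe the hypothesis on relational models uses.
def wordRel (w : List α) (a : α) (i j : ULift.{v} ℕ) : Prop :=
  w.drop i.down = a :: w.drop j.down

variable {w : List α}

theorem drop_eq_of_pathRel_wordRel {u : List α} {i j : ULift.{v} ℕ}
    (hu : pathRel (wordRel w) u i j) : w.drop i.down = u ++ w.drop j.down := by
  induction u generalizing i with
  | nil => exact congrArg (fun k : ULift ℕ => w.drop k.down) hu
  | cons a u ih =>
    obtain ⟨k, hik, hkj⟩ := hu
    rw [hik, ih hkj, List.cons_append]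

theorem pathRel_wordRel_of_drop_eq {u v : List α} {i : ℕ} (h : w.drop i = u ++ v) :
    pathRel (wordRel w) u (ULift.up.{v} i) ⟨i + u.length⟩ := by
  induction u generalizing i with
  | nil => rfl
  | cons a u ih =>
    have hdrop : w.drop (i + 1) = u ++ v := by
      rw [← List.drop_drop, h, List.cons_append, List.drop_one, List.tail_cons]
    refine ⟨⟨i + 1⟩, by rw [wordRel, hdrop, h, List.cons_append], ?_⟩
    rw [List.length_cons, ← add_assoc, add_right_comm]
    exact ih hdrop

theorem mem_matches'_iff_rinterp_wordRel (e : RegularExpression α) :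
    w ∈ e.matches' ↔ rinterp (wordRel.{v} w) e ⟨0⟩ ⟨w.length⟩ := by
  rw [rinterp_iff_exists_pathRel]
  constructor
  · intro hw
    refine ⟨w, hw, ?_⟩
    simpa using pathRel_wordRel_of_drop_eq (u := w) (v := []) (i := 0) (by simp)
  · rintro ⟨u, hu, hpath⟩
    have hwu := drop_eq_of_pathRel_wordRel hpath
    simp only [List.drop_zero, List.drop_length, List.append_nil] at hwu
    rwa [hwu]

end WordModel

theorem sum_le_of_forall_le {ι M : Type*} [IdemSemiring M] {s : Finset ι} {f : ι → M} {c : M}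
    (hf : ∀ i ∈ s, f i ≤ c) : ∑ i ∈ s, f i ≤ c :=
  Finset.sum_induction f (· ≤ c) (fun _ _ => add_le) zero_le hf

section KleeneElimination

variable {Q : Type*}

/-- Makes `q` available as an intermediate state of the paths weighted by `P`. -/
def elimStep (P : Q → Q → K) (q i j : Q) : K :=
  P i j + P i q * (P q q)∗ * P q j

variable {P : Q → Q → K} {q : Q}

theorem le_elimStep (i j : Q) : P i j ≤ elimStep P q i j :=
  le_self_add

theorem elimStep_mul_le {z : Q → K} (hz : ∀ i j, P i j * z j ≤ z i) (i j : Q) :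
    elimStep P q i j * z j ≤ z i := by
  rw [elimStep, add_mul]
  refine add_le (hz i j) ?_
  calc P i q * (P q q)∗ * P q j * z j = P i q * ((P q q)∗ * (P q j * z j)) := by
        simp only [mul_assoc]
    _ ≤ P i q * z q := by grw [hz q j, kstar_mul_le_self (hz q q)]
    _ ≤ z i := hz i q

theorem elimStep_mul_elimStep_self_le (i k : Q) :
    elimStep P q i q * elimStep P q q k ≤ elimStep P q i k := by
  set s := (P q q)∗
  have hleft : elimStep P q i q ≤ P i q * s :=
    add_le (le_mul_of_one_le_right' one_le_kstar) (by grw [mul_assoc, kstar_mul_le_kstar])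
  have hright : elimStep P q q k ≤ s * P q k :=
    add_le (le_mul_of_one_le_left' one_le_kstar) (by grw [mul_kstar_le_kstar])
  calc elimStep P q i q * elimStep P q q k ≤ P i q * (s * s) * P q k := by
        grw [hleft, hright]; simp only [mul_assoc, le_refl]
    _ = P i q * s * P q k := by rw [kstar_mul_kstar]
    _ ≤ elimStep P q i k := le_add_self

theorem elimStep_mul_elimStep_le {j : Q} (hj : ∀ i k, P i j * P j k ≤ P i k) (i k : Q) :
    elimStep P q i j * elimStep P q j k ≤ elimStep P q i k := by
  set s := (P q q)∗
  have through_q : P i q * s * P q k ≤ elimStep P q i k := le_add_self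
  have hAD : P i j * (P j q * s * P q k) ≤ elimStep P q i k :=
    calc P i j * (P j q * s * P q k) = P i j * P j q * s * P q k := by simp only [mul_assoc]
      _ ≤ P i q * s * P q k := by grw [hj i q]
      _ ≤ _ := through_q
  have hBC : P i q * s * P q j * P j k ≤ elimStep P q i k :=
    calc P i q * s * P q j * P j k = P i q * s * (P q j * P j k) := by simp only [mul_assoc]
      _ ≤ P i q * s * P q k := by grw [hj q k]
      _ ≤ _ := through_q
  have hBD : P i q * s * P q j * (P j q * s * P q k) ≤ elimStep P q i k :=
    calc P i q * s * P q j * (P j q * s * P q k)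
        = P i q * (s * (P q j * P j q) * s) * P q k := by simp only [mul_assoc]
      _ ≤ P i q * s * P q k := by grw [hj q q, kstar_mul_le_kstar, kstar_mul_kstar]
      _ ≤ _ := through_q
  rw [elimStep, elimStep, add_mul, mul_add, mul_add]
  exact add_le (add_le ((hj i k).trans (le_elimStep i k)) hAD) (add_le hBC hBD)

variable [DecidableEq Q]

/-- Kleene's elimination: `pathSum M l i j` is the total weight of the paths from `i` to `j` in
the weighted graph `M` all of whose intermediate states lie in `l`. -/
def pathSum (M : Q → Q → K) : List Q → Q → Q → K
  | [] => fun i j => (if i = j then 1 else 0) + M i j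
  | q :: l => elimStep (pathSum M l) q

variable {M : Q → Q → K}

theorem one_le_pathSum_self (l : List Q) (i : Q) : 1 ≤ pathSum M l i i := by
  induction l with
  | nil => simp [pathSum]
  | cons q l ih => exact ih.trans (le_elimStep i i)

theorem le_pathSum (l : List Q) (i j : Q) : M i j ≤ pathSum M l i j := by
  induction l with
  | nil => exact le_add_self
  | cons q l ih => exact ih.trans (le_elimStep i j)

theorem pathSum_mul_le {z : Q → K} (hz : ∀ i j, M i j * z j ≤ z i) (l : List Q) (i j : Q) :
    pathSum M l i j * z j ≤ z i := by
  induction l generalizing i j with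
  | nil =>
    rw [pathSum, add_mul]
    refine add_le ?_ (hz i j)
    split_ifs with hij
    · rw [hij, one_mul]
    · rw [zero_mul]
      exact zero_le
  | cons q l ih => exact elimStep_mul_le ih i j

theorem pathSum_mul_pathSum_le {l : List Q} {j : Q} (hj : j ∈ l) (i k : Q) :
    pathSum M l i j * pathSum M l j k ≤ pathSum M l i k := by
  induction l generalizing i k with
  | nil => simp at hj
  | cons q l ih =>
    rcases List.mem_cons.1 hj with rfl | hj
    · exact elimStep_mul_elimStep_self_le i k
    · exact elimStep_mul_elimStep_le (ih hj) i k

end KleeneElimination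

def RegularExpression.chars [DecidableEq α] : RegularExpression α → Finset α
  | zero => ∅
  | epsilon => ∅
  | char a => {a}
  | plus s t => s.chars ∪ t.chars
  | comp s t => s.chars ∪ t.chars
  | star s => s.chars

section Automaton

variable {Q : Type*} [Fintype Q] (δ : Q → α → Q)

open scoped Classical in
noncomputable def reach (L : Language α) (q : Q) : Finset Q :=
  {r | ∃ w ∈ L, w.foldl δ q = r}

variable {δ}

theorem mem_reach {L : Language α} {q r : Q} :
    r ∈ reach δ L q ↔ ∃ w ∈ L, w.foldl δ q = r := by
  simp [reach]

theorem mem_reach_of_mul_le {L L' L'' : Language α} (hL : L * L' ≤ L'') {q r t : Q}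
    (hr : r ∈ reach δ L q) (ht : t ∈ reach δ L' r) : t ∈ reach δ L'' q := by
  obtain ⟨w, hw, rfl⟩ := mem_reach.1 hr
  obtain ⟨v, hv, rfl⟩ := mem_reach.1 ht
  exact mem_reach.2 ⟨w ++ v, hL (Language.append_mem_mul hw hv), List.foldl_append ..⟩

theorem reach_mono {L L' : Language α} (hL : L ≤ L') (q : Q) : reach δ L q ⊆ reach δ L' q :=
  fun r hr => by
    obtain ⟨w, hw, rfl⟩ := mem_reach.1 hr
    exact mem_reach.2 ⟨w, hL hw, rfl⟩

variable {P : Q → Q → K}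

theorem le_sum_reach {L : Language α} {w : List α} (hw : w ∈ L) {q : Q} {x : K}
    (hx : x ≤ P q (w.foldl δ q)) : x ≤ ∑ r ∈ reach δ L q, P q r :=
  hx.trans (Finset.single_le_sum_of_canonicallyOrdered (mem_reach.2 ⟨w, hw, rfl⟩))

theorem sum_reach_mul_le (htrans : ∀ q r t, P q r * P r t ≤ P q t) {L L' L'' : Language α}
    (hL : L * L' ≤ L'') {y : K} (hy : ∀ r, y ≤ ∑ t ∈ reach δ L' r, P r t) (q : Q) :
    (∑ r ∈ reach δ L q, P q r) * y ≤ ∑ t ∈ reach δ L'' q, P q t := by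
  rw [Finset.sum_mul]
  refine sum_le_of_forall_le fun r hr => ?_
  grw [hy r, Finset.mul_sum]
  exact sum_le_of_forall_le fun t ht =>
    (htrans q r t).trans
      (Finset.single_le_sum_of_canonicallyOrdered (mem_reach_of_mul_le hL hr ht))

theorem interp_le_sum_reach [DecidableEq α] (h : α → K) {e : RegularExpression α}
    (hone : ∀ q, 1 ≤ P q q) (hchar : ∀ q, ∀ a ∈ e.chars, h a ≤ P q (δ q a))
    (htrans : ∀ q r t, P q r * P r t ≤ P q t) (q : Q) :
    interp h e ≤ ∑ r ∈ reach δ e.matches' q, P q r := by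
  induction e generalizing q with
  | zero => exact zero_le
  | epsilon => exact le_sum_reach (L := epsilon.matches') Language.nil_mem_one (hone q)
  | char a =>
    exact le_sum_reach (L := (char a).matches') (w := [a]) rfl (hchar q a (by simp [chars]))
  | plus s t ihs iht =>
    have hs := ihs (fun q a ha => hchar q a (by simp [chars, ha])) q
    have ht := iht (fun q a ha => hchar q a (by simp [chars, ha])) q
    exact add_le (hs.trans (Finset.sum_le_sum_of_subset (reach_mono le_self_add q)))
      (ht.trans (Finset.sum_le_sum_of_subset (reach_mono le_add_self q)))
  | comp s t ihs iht =>
    have ht := fun r => iht (fun q a ha => hchar q a (by simp [chars, ha])) r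
    exact (mul_le_mul_left (ihs (fun q a ha => hchar q a (by simp [chars, ha])) q) _).trans
      (sum_reach_mul_le htrans le_rfl ht q)
  | star s ih =>
    have hs := fun r => ih (fun q a ha => hchar q a (by simpa [chars] using ha)) r
    refine kstar_le_of_mul_le_left
      (le_sum_reach (L := s.star.matches') (Language.nil_mem_kstar _) (hone q))
      (sum_reach_mul_le htrans ?_ hs q)
    exact kstar_mul_le_kstar

end Automaton

section TransitionMatrix

variable {Q : Type*} [DecidableEq Q] (δ : Q → α → Q) (h : α → K)

def transMatrix (A : Finset α) (q r : Q) : K :=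
  ∑ a ∈ A with δ q a = r, h a

variable {δ h}

theorem transMatrix_mul_le {v : Q → K} (hstep : ∀ q a, h a * v (δ q a) ≤ v q) (A : Finset α)
    (q r : Q) : transMatrix δ h A q r * v r ≤ v q := by
  rw [transMatrix, Finset.sum_mul]
  refine sum_le_of_forall_le fun a ha => ?_
  rw [← (Finset.mem_filter.1 ha).2]
  exact hstep q a

theorem le_transMatrix {A : Finset α} {a : α} (ha : a ∈ A) (q : Q) :
    h a ≤ transMatrix δ h A q (δ q a) :=
  Finset.single_le_sum_of_canonicallyOrdered (Finset.mem_filter.2 ⟨ha, rfl⟩)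

end TransitionMatrix

theorem interp_le_of_forall_one_le {Q : Type*} [Finite Q] (δ : Q → α → Q) (h : α → K)
    {v : Q → K} (hstep : ∀ q a, h a * v (δ q a) ≤ v q) {e : RegularExpression α} {q : Q}
    (hacc : ∀ w ∈ e.matches', 1 ≤ v (w.foldl δ q)) : interp h e ≤ v q := by
  classical
  have := Fintype.ofFinite Q
  let P := pathSum (transMatrix δ h e.chars) Finset.univ.toList
  have hPv : ∀ q r, P q r * v r ≤ v q := pathSum_mul_le (transMatrix_mul_le hstep _) _
  calc interp h e ≤ ∑ r ∈ reach δ e.matches' q, P q r :=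
        interp_le_sum_reach h (fun _ => one_le_pathSum_self _ _)
          (fun _ _ ha => (le_transMatrix ha _).trans (le_pathSum _ _ _))
          (fun _ r _ => pathSum_mul_pathSum_le (Finset.mem_toList.2 (Finset.mem_univ r)) _ _) q
    _ ≤ v q := sum_le_of_forall_le fun r hr => by
        obtain ⟨w, hw, rfl⟩ := mem_reach.1 hr
        exact (le_mul_of_one_le_right' (hacc w hw)).trans (hPv _ _)

namespace RegularExpression

theorem one_le_interp_of_matchEpsilon (h : α → K) {g : RegularExpression α}
    (hg : g.matchEpsilon) : 1 ≤ interp h g := by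
  induction g with
  | zero | char => simp [matchEpsilon] at hg
  | epsilon => exact le_rfl
  | plus s t ihs iht =>
    rcases Bool.or_eq_true_iff.1 hg with hs | ht
    · exact (ihs hs).trans le_self_add
    · exact (iht ht).trans le_add_self
  | comp s t ihs iht =>
    obtain ⟨hs, ht⟩ := Bool.and_eq_true_iff.1 hg
    exact one_le_mul (ihs hs) (iht ht)
  | star s => exact one_le_kstar

section

variable [DecidableEq α]

theorem nil_mem_matches'_iff (g : RegularExpression α) :
    [] ∈ g.matches' ↔ g.matchEpsilon :=
  (rmatch_iff_matches' g []).symm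

def pderiv (a : α) : RegularExpression α → List (RegularExpression α)
  | zero => []
  | epsilon => []
  | char b => if a = b then [epsilon] else []
  | plus s t => pderiv a s ++ pderiv a t
  | comp s t => (pderiv a s).map (comp · t) ++ if s.matchEpsilon then pderiv a t else []
  | star s => (pderiv a s).map (comp · (star s))

theorem mul_interp_le_of_mem_pderiv (h : α → K) {a : α} {g d : RegularExpression α}
    (hd : d ∈ pderiv a g) : h a * interp h d ≤ interp h g := by
  induction g generalizing d with
  | zero | epsilon => simp [pderiv] at hd
  | char b =>
    obtain ⟨rfl, rfl⟩ : a = b ∧ d = epsilon := by simpa [pderiv] using hd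
    exact (mul_one _).le
  | plus s t ihs iht =>
    rcases List.mem_append.1 hd with hd | hd
    · exact (ihs hd).trans le_self_add
    · exact (iht hd).trans le_add_self
  | comp s t ihs iht =>
    rcases List.mem_append.1 hd with hd | hd
    · obtain ⟨c, hc, rfl⟩ := List.mem_map.1 hd
      calc h a * (interp h c * interp h t) = h a * interp h c * interp h t := (mul_assoc ..).symm
        _ ≤ interp h s * interp h t := by grw [ihs hc]
    · split_ifs at hd with hs
      · exact (iht hd).trans (le_mul_of_one_le_left' (one_le_interp_of_matchEpsilon h hs))
      · simp at hd
  | star s ih =>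
    obtain ⟨c, hc, rfl⟩ := List.mem_map.1 hd
    calc h a * (interp h c * (interp h s)∗) = h a * interp h c * (interp h s)∗ :=
          (mul_assoc ..).symm
      _ ≤ interp h s * (interp h s)∗ := by grw [ih hc]
      _ ≤ (interp h s)∗ := mul_kstar_le_kstar

theorem exists_mem_pderiv_of_cons_mem {a : α} {w : List α} {g : RegularExpression α}
    (hw : a :: w ∈ g.matches') : ∃ d ∈ pderiv a g, w ∈ d.matches' := by
  induction g generalizing w with
  | zero => exact absurd hw (Language.notMem_zero _)
  | epsilon => exact absurd ((Language.mem_one _).1 hw) (List.cons_ne_nil _ _)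
  | char b =>
    obtain ⟨rfl, rfl⟩ := List.cons_eq_cons.1 (hw : a :: w = [b])
    exact ⟨epsilon, by simp [pderiv], Language.nil_mem_one⟩
  | plus s t ihs iht =>
    rcases (Language.mem_add _ _ _).1 hw with hw | hw
    · obtain ⟨d, hd, hwd⟩ := ihs hw
      exact ⟨d, List.mem_append_left _ hd, hwd⟩
    · obtain ⟨d, hd, hwd⟩ := iht hw
      exact ⟨d, List.mem_append_right _ hd, hwd⟩
  | comp s t ihs iht =>
    obtain ⟨u, hu, v, hv, huv⟩ := Language.mem_mul.1 hw
    cases u with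
    | nil =>
      rw [List.nil_append] at huv
      obtain ⟨d, hd, hwd⟩ := iht (huv ▸ hv)
      have hs : s.matchEpsilon := (nil_mem_matches'_iff s).1 hu
      exact ⟨d, List.mem_append_right _ (by simpa [hs] using hd), hwd⟩
    | cons b u =>
      obtain ⟨rfl, rfl⟩ := List.cons_eq_cons.1 huv
      obtain ⟨d, hd, hud⟩ := ihs hu
      exact ⟨comp d t, List.mem_append_left _ (List.mem_map_of_mem hd),
        Language.append_mem_mul hud hv⟩
  | star s ih =>
    obtain ⟨_ | ⟨u, S⟩, hS, hmem⟩ := Language.mem_kstar_iff_exists_nonempty.1 hw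
    · simp at hS
    obtain ⟨hu, hu0⟩ := hmem u List.mem_cons_self
    obtain ⟨b, u, rfl⟩ := List.exists_cons_of_ne_nil hu0
    obtain ⟨rfl, rfl⟩ := List.cons_eq_cons.1 hS
    obtain ⟨d, hd, hud⟩ := ih hu
    exact ⟨comp d (star s), List.mem_map_of_mem hd, Language.append_mem_mul hud
      (Language.join_mem_kstar fun y hy => (hmem y (List.mem_cons_of_mem _ hy)).1)⟩

end

def pderivClosure : RegularExpression α → List (RegularExpression α)
  | zero => [zero]
  | epsilon => [epsilon]
  | char b => [char b, epsilon]
  | plus s t => plus s t :: (pderivClosure s ++ pderivClosure t)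
  | comp s t => (pderivClosure s).map (comp · t) ++ pderivClosure t
  | star s => star s :: (pderivClosure s).map (comp · (star s))

theorem self_mem_pderivClosure (g : RegularExpression α) : g ∈ g.pderivClosure := by
  induction g with
  | comp s t ihs => exact List.mem_append_left _ (List.mem_map_of_mem ihs)
  | _ => simp [pderivClosure]

theorem pderiv_subset_pderivClosure [DecidableEq α] (a : α) {g d : RegularExpression α}
    (hd : d ∈ g.pderivClosure) : pderiv a d ⊆ g.pderivClosure := by
  intro x hx
  induction g generalizing d x with
  | zero | epsilon => simp_all [pderivClosure, pderiv]
  | char b =>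
    rcases List.mem_pair.1 hd with rfl | rfl
    · by_cases hab : a = b <;> simp_all [pderiv, pderivClosure]
    · simp [pderiv] at hx
  | plus s t ihs iht =>
    simp only [pderivClosure, List.mem_cons, List.mem_append] at hd ⊢
    rcases hd with rfl | hd | hd
    · exact Or.inr ((List.mem_append.1 hx).imp (ihs (self_mem_pderivClosure s) ·)
        (iht (self_mem_pderivClosure t) ·))
    · exact Or.inr (Or.inl (ihs hd hx))
    · exact Or.inr (Or.inr (iht hd hx))
  | comp s t ihs iht =>
    simp only [pderivClosure, List.mem_append, List.mem_map] at hd ⊢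
    rcases hd with ⟨c, hc, rfl⟩ | hd
    · simp only [pderiv, List.mem_append, List.mem_map] at hx
      rcases hx with ⟨c', hc', rfl⟩ | hx
      · exact Or.inl ⟨c', ihs hc hc', rfl⟩
      · split_ifs at hx
        · exact Or.inr (iht (self_mem_pderivClosure t) hx)
        · simp at hx
    · exact Or.inr (iht hd hx)
  | star s ih =>
    simp only [pderivClosure, List.mem_cons, List.mem_map] at hd ⊢
    refine Or.inr ?_
    rcases hd with rfl | ⟨c, hc, rfl⟩
    · obtain ⟨c', hc', rfl⟩ := List.mem_map.1 hx
      exact ⟨c', ih (self_mem_pderivClosure s) hc', rfl⟩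
    · simp only [pderiv, List.mem_append, List.mem_map] at hx
      rcases hx with ⟨c', hc', rfl⟩ | hx
      · exact ⟨c', ih hc hc', rfl⟩
      · split_ifs at hx
        · obtain ⟨c', hc', rfl⟩ := List.mem_map.1 hx
          exact ⟨c', ih (self_mem_pderivClosure s) hc', rfl⟩
        · simp at hx

end RegularExpression

section PderivAutomaton

-- `RegularExpression α` has no `DecidableEq` instance.
open scoped Classical

noncomputable def pderivStep (g : RegularExpression α) (S : Finset {d // d ∈ g.pderivClosure})
    (a : α) : Finset {d // d ∈ g.pderivClosure} :=
  {d | ∃ d' ∈ S, d.1 ∈ pderiv a d'.1}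

variable {g : RegularExpression α}

theorem mem_pderivStep {S : Finset {d // d ∈ g.pderivClosure}} {a : α}
    {d : {d // d ∈ g.pderivClosure}} :
    d ∈ pderivStep g S a ↔ ∃ d' ∈ S, d.1 ∈ pderiv a d'.1 := by
  simp only [pderivStep, Finset.mem_filter, Finset.mem_univ, true_and]

theorem mul_sum_interp_pderivStep_le (h : α → K) (S : Finset {d // d ∈ g.pderivClosure})
    (a : α) : h a * ∑ d ∈ pderivStep g S a, interp h d.1 ≤ ∑ d ∈ S, interp h d.1 := by
  rw [Finset.mul_sum]
  refine sum_le_of_forall_le fun d hd => ?_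
  obtain ⟨d', hd', hdd'⟩ := mem_pderivStep.1 hd
  exact (mul_interp_le_of_mem_pderiv h hdd').trans
    (Finset.single_le_sum_of_canonicallyOrdered
      (f := fun d : {d // d ∈ g.pderivClosure} => interp h d.1) hd')

theorem exists_nil_mem_foldl_pderivStep {w : List α} {S : Finset {d // d ∈ g.pderivClosure}}
    (hS : ∃ d ∈ S, w ∈ d.1.matches') : ∃ d ∈ w.foldl (pderivStep g) S, [] ∈ d.1.matches' := by
  induction w generalizing S with
  | nil => exact hS
  | cons a w ih =>
    obtain ⟨d, hdS, hw⟩ := hS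
    obtain ⟨d', hd', hwd'⟩ := exists_mem_pderiv_of_cons_mem hw
    exact ih ⟨⟨d', pderiv_subset_pderivClosure a d.2 hd'⟩,
      mem_pderivStep.2 ⟨d, hdS, hd'⟩, hwd'⟩

theorem interp_le_interp_of_matches'_le (h : α → K) {e f : RegularExpression α}
    (hef : e.matches' ≤ f.matches') : interp h e ≤ interp h f := by
  let f₀ : {d // d ∈ f.pderivClosure} := ⟨f, self_mem_pderivClosure f⟩
  rw [← Finset.sum_singleton (fun d : {d // d ∈ f.pderivClosure} => interp h d.1) f₀]
  refine interp_le_of_forall_one_le (pderivStep f) h (v := fun S => ∑ d ∈ S, interp h d.1)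
    (mul_sum_interp_pderivStep_le h) fun w hw => ?_
  obtain ⟨d, hd, hnil⟩ :=
    exists_nil_mem_foldl_pderivStep ⟨f₀, Finset.mem_singleton_self _, hef hw⟩
  exact (one_le_interp_of_matchEpsilon h ((nil_mem_matches'_iff _).1 hnil)).trans
    (Finset.single_le_sum_of_canonicallyOrdered
      (f := fun d : {d // d ∈ f.pderivClosure} => interp h d.1) hd)

end PderivAutomaton

end

/-- **Relational model property** (Pratt): if the relational interpretations of `e` and `f`
agree for every type `X` and every map `h : α → (X → X → Prop)`, then `e` and `f` agree in
every Kleene algebra. -/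
theorem relational_model_property {α : Type*} (e f : RegularExpression α)
    (hrel : ∀ (X : Type*) (h : α → X → X → Prop), rinterp h e = rinterp h f) :
    ∀ (K : Type*) [KleeneAlgebra K] (h : α → K), interp h e = interp h f := by
  intro K _ h
  have hL : e.matches' = f.matches' := Language.ext fun w => by
    rw [mem_matches'_iff_rinterp_wordRel, hrel, ← mem_matches'_iff_rinterp_wordRel]
  exact le_antisymm (interp_le_interp_of_matches'_le h hL.le)
    (interp_le_interp_of_matches'_le h hL.ge)
end

section
/- Let K be a star-continuous Kleene algebra, h : α → K a map, e a regular expression over α, and x ∈ K. If for every word w ∈ matches' e it holds that ĥ w ≤ x, then ĥ e ≤ x. -/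
lemma interp_aux {α : Type*} {K : Type*} [KleeneAlgebra K]
    (hsc : ∀ u x v y : K, (∀ n : ℕ, u * x ^ n * v ≤ y) → u * KStar.kstar x * v ≤ y)
    (h : α → K) (e : RegularExpression α) :
    ∀ u v y : K, (∀ w ∈ e.matches', u * (w.map h).prod * v ≤ y) →
      u * interp h e * v ≤ y := by
  induction e with
  | zero =>
    intro u v y _
    simp [interp]
  | epsilon =>
    intro u v y hw
    simp only [interp]
    simpa using hw [] (by simp [RegularExpression.matches'_epsilon, Language.mem_one])
  | char a =>
    intro u v y hw
    simp only [interp]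
    simpa using hw [a] (by rw [RegularExpression.matches'_char]; exact Set.mem_singleton _)
  | plus e f ihe ihf =>
    intro u v y hw
    have he := ihe u v y fun w hwmem => hw w (by simp [RegularExpression.matches'_add]; exact Or.inl hwmem)
    have hf := ihf u v y fun w hwmem => hw w (by simp [RegularExpression.matches'_add]; exact Or.inr hwmem)
    calc u * interp h (e.plus f) * v
        = u * interp h e * v + u * interp h f * v := by
          simp [interp, mul_add, add_mul]
      _ ≤ y := add_le he hf
  | comp e f ihe ihf =>
    intro u v y hw
    have : u * (interp h e * (interp h f * v)) ≤ y := by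
      rw [← mul_assoc]
      apply ihe
      intro w1 hw1
      rw [mul_assoc, ← mul_assoc, ← mul_assoc]
      apply ihf
      intro w2 hw2
      have hmem : w1 ++ w2 ∈ (e * f).matches' := by
        rw [RegularExpression.matches'_mul]
        exact Language.append_mem_mul hw1 hw2
      have := hw (w1 ++ w2) hmem
      simpa [mul_assoc] using this
    simpa [interp, mul_assoc] using this
  | star e ihe =>
    intro u v y hw
    simp only [interp]
    apply hsc
    intro n
    induction n generalizing u with
    | zero =>
      simpa using hw [] (by rw [RegularExpression.matches'_star]; exact Language.nil_mem_kstar _)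
    | succ n ihn =>
      rw [pow_succ', ← mul_assoc u, mul_assoc (u * interp h e)]
      apply ihe
      intro w1 hw1
      rw [← mul_assoc]
      apply ihn
      intro w hwmem
      rw [RegularExpression.matches'_star, Language.mem_kstar] at hwmem
      obtain ⟨L, rfl, hL⟩ := hwmem
      have hmem : w1 ++ L.flatten ∈ (e.star).matches' := by
        rw [RegularExpression.matches'_star]
        exact List.flatten_cons ▸ Language.join_mem_kstar
          (by intro z hz; rcases List.mem_cons.1 hz with rfl | hz; exacts [hw1, hL z hz])
      have := hw (w1 ++ L.flatten) hmem
      simpa [mul_assoc] using this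

/-- In a star-continuous Kleene algebra, `ĥ e` is a least upper bound of the interpretations
of the words in the language of `e`. -/
theorem star_continuous_interp_le {α : Type*} {K : Type*} [KleeneAlgebra K]
    (hsc : ∀ u x v y : K, (∀ n : ℕ, u * x ^ n * v ≤ y) → u * KStar.kstar x * v ≤ y)
    (h : α → K) (e : RegularExpression α) (x : K)
    (hw : ∀ w ∈ e.matches', (w.map h).prod ≤ x) :
    interp h e ≤ x := by
  have := interp_aux hsc h e 1 1 x (fun w hwm => by simpa using hw w hwm)
  simpa using this
end

section
/- For every regular expression e over α, every word w ∈ matches' e, every Kleene algebra K and every map h : α → K, it holds that ĥ w ≤ ĥ e. -/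
/-- Every word in the language of `e` is provably below `e`: for every Kleene algebra `K`
and every `h : α → K`, the interpretation of the word is below the interpretation of `e`. -/
theorem word_le_interp {α : Type*} (e : RegularExpression α) (w : List α)
    (hw : w ∈ e.matches') :
    ∀ (K : Type*) [KleeneAlgebra K] (h : α → K), (w.map h).prod ≤ interp h e := by
  induction e generalizing w with
  | zero => exact absurd hw (by simp [RegularExpression.matches'])
  | epsilon =>
    intro K _ h
    simp only [RegularExpression.matches', Language.mem_one] at hw
    subst hw; simp [interp]
  | char a =>
    intro K _ h
    simp only [RegularExpression.matches', Set.mem_singleton_iff] at hw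
    subst hw; simp [interp]
  | plus e f ihe ihf =>
    intro K _ h
    simp only [RegularExpression.matches', Language.mem_add] at hw
    rcases hw with hw | hw
    · exact le_trans (ihe w hw K h) (le_add_right le_rfl)
    · exact le_trans (ihf w hw K h) (le_add_left le_rfl)
  | comp e f ihe ihf =>
    intro K _ h
    simp only [RegularExpression.matches', Language.mem_mul] at hw
    obtain ⟨u, hu, v, hv, rfl⟩ := hw
    rw [List.map_append, List.prod_append]
    exact mul_le_mul' (ihe u hu K h) (ihf v hv K h)
  | star e ihe =>
    intro K _ h
    simp only [RegularExpression.matches', Language.mem_kstar] at hw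
    obtain ⟨L, rfl, hL⟩ := hw
    show ((L.flatten).map h).prod ≤ KStar.kstar (interp h e)
    induction L with
    | nil => simp
    | cons u L ih =>
      rw [List.flatten_cons, List.map_append, List.prod_append]
      calc (u.map h).prod * (L.flatten.map h).prod
          ≤ (interp h e) * KStar.kstar (interp h e) :=
            mul_le_mul' (ihe u (hL u (by simp)) K h)
              (ih fun y hy => hL y (List.mem_cons_of_mem _ hy))
        _ ≤ _ := mul_kstar_le_kstar
end

section
/- Let e and f be regular expressions over α with matches' e = matches' f. Then for every star-continuous Kleene algebra K and every map h : α → K, ĥ e = ĥ f. -/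
/-!
In any Kleene algebra, `interp h e` is an upper bound of the images `h(w)` of the words
`w ∈ L(e)`. Star-continuity makes it moreover the least upper bound, and in the strong sense
that `u * interp h e * v` is the least upper bound of the `u * h(w) * v`: this contextual form
is what survives the passage through products, and through `x∗` via its powers `x ^ n`.
Hence `interp h e` depends only on `L(e)`.
-/

section KleeneAlgebra

open scoped Computability

def StarContinuous (K : Type*) [KleeneAlgebra K] : Prop :=
  ∀ u x v y : K, (∀ n : ℕ, u * x ^ n * v ≤ y) → u * x∗ * v ≤ y

variable {α K : Type*} [KleeneAlgebra K]

def wordInterp (h : α → K) (w : List α) : K :=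
  (w.map h).prod

variable (h : α → K)

@[simp]
lemma wordInterp_nil : wordInterp h [] = 1 := rfl

@[simp]
lemma wordInterp_singleton (a : α) : wordInterp h [a] = h a := by
  simp [wordInterp]

@[simp]
lemma wordInterp_append (w₁ w₂ : List α) :
    wordInterp h (w₁ ++ w₂) = wordInterp h w₁ * wordInterp h w₂ := by
  simp [wordInterp]

lemma Language.exists_mem_pow_of_mem_kstar {L : Language α} {w : List α} (hw : w ∈ L∗) :
    ∃ n : ℕ, w ∈ L ^ n := by
  rwa [Language.kstar_eq_iSup_pow, Language.mem_iSup] at hw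

lemma wordInterp_le_pow {L : Language α} {x : K} (hx : ∀ w ∈ L, wordInterp h w ≤ x) :
    ∀ n : ℕ, ∀ w ∈ L ^ n, wordInterp h w ≤ x ^ n
  | 0, w, hw => by simp_all [Language.mem_one]
  | n + 1, w, hw => by
    obtain ⟨w₁, hw₁, w₂, hw₂, rfl⟩ := Language.mem_mul.mp (pow_succ L n ▸ hw)
    rw [wordInterp_append, pow_succ]
    exact mul_le_mul' (wordInterp_le_pow hx n w₁ hw₁) (hx w₂ hw₂)

lemma wordInterp_le_interp (e : RegularExpression α) :
    ∀ w ∈ e.matches', wordInterp h w ≤ interp h e := by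
  induction e with
  | zero => simp [RegularExpression.matches']
  | epsilon => simp [RegularExpression.matches', Language.mem_one, interp]
  | char a => rintro w rfl; simp [interp]
  | plus e f ihe ihf =>
    rintro w (hw | hw)
    · exact (ihe w hw).trans le_self_add
    · exact (ihf w hw).trans le_add_self
  | comp e f ihe ihf =>
    rintro w ⟨w₁, hw₁, w₂, hw₂, rfl⟩
    rw [wordInterp_append]
    exact mul_le_mul' (ihe w₁ hw₁) (ihf w₂ hw₂)
  | star e ihe =>
    intro w hw
    obtain ⟨n, hn⟩ := Language.exists_mem_pow_of_mem_kstar hw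
    exact (wordInterp_le_pow h ihe n w hn).trans pow_le_kstar

def IsLeastInContext (L : Language α) (x : K) : Prop :=
  ∀ u v y : K, (∀ w ∈ L, u * wordInterp h w * v ≤ y) → u * x * v ≤ y

namespace IsLeastInContext

variable {h}

lemma zero : IsLeastInContext h (0 : Language α) 0 := by
  intro u v y _
  simp

lemma one : IsLeastInContext h (1 : Language α) 1 := by
  intro u v y H
  simpa using H [] Language.nil_mem_one

lemma char (a : α) : IsLeastInContext h {[a]} (h a) := by
  intro u v y H
  simpa using H [a] rfl

lemma add {L L' : Language α} {x x' : K} (hx : IsLeastInContext h L x)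
    (hx' : IsLeastInContext h L' x') : IsLeastInContext h (L + L') (x + x') := by
  intro u v y H
  rw [mul_add, add_mul]
  exact add_le (hx u v y fun w hw => H w (Or.inl hw)) (hx' u v y fun w hw => H w (Or.inr hw))

lemma mul {L L' : Language α} {x x' : K} (hx : IsLeastInContext h L x)
    (hx' : IsLeastInContext h L' x') : IsLeastInContext h (L * L') (x * x') := by
  intro u v y H
  rw [← mul_assoc, mul_assoc]
  refine hx u (x' * v) y fun w₁ hw₁ => ?_
  rw [← mul_assoc]
  refine hx' (u * wordInterp h w₁) v y fun w₂ hw₂ => ?_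
  simpa [mul_assoc] using H _ (Language.append_mem_mul hw₁ hw₂)

lemma pow {L : Language α} {x : K} (hx : IsLeastInContext h L x) :
    ∀ n : ℕ, IsLeastInContext h (L ^ n) (x ^ n)
  | 0 => by simpa using one
  | n + 1 => by simpa only [pow_succ] using (hx.pow n).mul hx

lemma kstar (hK : StarContinuous K) {L : Language α} {x : K} (hx : IsLeastInContext h L x) :
    IsLeastInContext h L∗ x∗ := by
  intro u v y H
  exact hK u x v y fun n => hx.pow n u v y fun w hw => H w ((pow_le_kstar : L ^ n ≤ L∗) hw)

end IsLeastInContext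

lemma isLeastInContext_interp (hK : StarContinuous K) (e : RegularExpression α) :
    IsLeastInContext h e.matches' (interp h e) := by
  induction e with
  | zero => exact .zero
  | epsilon => exact .one
  | char a => exact .char a
  | plus e f ihe ihf => exact ihe.add ihf
  | comp e f ihe ihf => exact ihe.mul ihf
  | star e ihe => exact ihe.kstar hK

lemma interp_mono_of_matches'_le (hK : StarContinuous K) {e f : RegularExpression α}
    (hef : e.matches' ≤ f.matches') : interp h e ≤ interp h f := by
  simpa using isLeastInContext_interp h hK e 1 1 (interp h f) fun w hw => by
    simpa using wordInterp_le_interp h f w (hef hw)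

end KleeneAlgebra

/-- Language-equivalent expressions agree in every star-continuous Kleene algebra. -/
theorem language_eq_star_continuous {α : Type*} (e f : RegularExpression α)
    (hlang : e.matches' = f.matches') :
    ∀ (K : Type*) [KleeneAlgebra K],
      (∀ u x v y : K, (∀ n : ℕ, u * x ^ n * v ≤ y) → u * KStar.kstar x * v ≤ y) →
      ∀ h : α → K, interp h e = interp h f := by
  intro K _ hK h
  exact le_antisymm (interp_mono_of_matches'_le h hK hlang.le)
    (interp_mono_of_matches'_le h hK hlang.ge)
end

section
/- Let A = (Q, δ, I, F) be an NFA over α with finite state set Q, and let R₁, R₂, R₃ be relations on Q. If s is a least solution to the transformation automaton A[R₂] and s' is a least solution to A[R₃ ∘ R₂], then s(R₁) ⊴ s'(R₃ ∘ R₁). -/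
universe u

/-- `e ⊴ f`: under every interpretation into any Kleene algebra, `ĥ e ≤ ĥ f`. -/
def kle {α : Type*} (e f : RegularExpression α) : Prop :=
  ∀ (K : Type u) [KleeneAlgebra K] (h : α → K), interp h e ≤ interp h f

/-- Composition of relations: `(S ∘ T) q q'' ↔ ∃ q', S q q' ∧ T q' q''`. -/
def relComp {Q : Type*} (S T : Q → Q → Prop) : Q → Q → Prop :=
  fun q q'' => ∃ q', S q q' ∧ T q' q''

/-- The relation `δ_a = {(q, q') : q' ∈ δ q a}` induced by letter `a` in the NFA `A`. -/
def deltaRel {α Q : Type*} (A : NFA α Q) (a : α) : Q → Q → Prop :=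
  fun q q' => q' ∈ A.step q a

/-- A solution to the `R`-transformation automaton `A[R]`: its states are the relations on
`Q`, the sole accepting state is `R`, and each state `S` has an `a`-transition to
`S ∘ δ_a`. -/
def RelSolution {α Q : Type*} (A : NFA α Q) (R : Q → Q → Prop)
    (s : (Q → Q → Prop) → RegularExpression α) : Prop :=
  kle.{u} 1 (s R) ∧
  ∀ (S : Q → Q → Prop) (a : α),
    kle.{u} (RegularExpression.char a * s (relComp S (deltaRel A a))) (s S)

/-- A least solution to the transformation automaton `A[R]`. -/
def LeastRelSolution {α Q : Type*} (A : NFA α Q) (R : Q → Q → Prop)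
    (s : (Q → Q → Prop) → RegularExpression α) : Prop :=
  RelSolution.{u} A R s ∧
  ∀ s' : (Q → Q → Prop) → RegularExpression α, RelSolution.{u} A R s' →
    ∀ S : Q → Q → Prop, kle.{u} (s S) (s' S)

/-- Shifting solutions of transformation automata:
`sol_{A[R₂]}(R₁) ⊴ sol_{A[R₃ ∘ R₂]}(R₃ ∘ R₁)`. -/
theorem transformation_solution_shift {α : Type*} {Q : Type*} [Finite Q]
    (A : NFA α Q) (R₁ R₂ R₃ : Q → Q → Prop)
    (s s' : (Q → Q → Prop) → RegularExpression α)
    (hs : LeastRelSolution.{u} A R₂ s) (hs' : LeastRelSolution.{u} A (relComp R₃ R₂) s') :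
    kle.{u} (s R₁) (s' (relComp R₃ R₁)) := by
  have hassoc : ∀ S T U : Q → Q → Prop,
      relComp (relComp S T) U = relComp S (relComp T U) := by
    intro S T U
    funext q q''
    simp only [relComp]
    apply propext
    constructor
    · rintro ⟨x, ⟨y, hy, hx⟩, h⟩; exact ⟨y, hy, x, hx, h⟩
    · rintro ⟨y, hy, x, hx, h⟩; exact ⟨x, ⟨y, hy, hx⟩, h⟩
  have ht : RelSolution.{u} A R₂ (fun S => s' (relComp R₃ S)) := by
    constructor
    · exact hs'.1.1
    · intro S a
      have := hs'.1.2 (relComp R₃ S) a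
      rwa [hassoc] at this
  exact hs.2 _ ht R₁
end

section
/- Let A = (Q, δ, I, F) be an NFA over α with finite state set Q, let q ∈ Q, q_f ∈ F, and let R be a relation on Q with R q q_f. If t is a least solution to the transformation automaton A[R] and s is a least solution to A, then t(id) ⊴ s(q), where id is the identity relation on Q. -/
universe u

/-- A solution to the NFA `A`. -/
def AutSolution {α Q : Type*} (A : NFA α Q) (s : Q → RegularExpression α) : Prop :=
  (∀ q ∈ A.accept, kle.{u} 1 (s q)) ∧
  ∀ (q : Q) (a : α) (q' : Q), q' ∈ A.step q a →
    kle.{u} (RegularExpression.char a * s q') (s q)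

/-- A least solution to the NFA `A`. -/
def LeastAutSolution {α Q : Type*} (A : NFA α Q) (s : Q → RegularExpression α) : Prop :=
  AutSolution.{u} A s ∧
  ∀ s' : Q → RegularExpression α, AutSolution.{u} A s' → ∀ q, kle.{u} (s q) (s' q)

/-!
Summing a solution `s` of `A` over the `S`-successors of the fixed state `q` turns it into a
solution of `A[R]`: the accepting state `R` relates `q` to the accepting `qf`, and every
`S ∘ δ_a`-successor `q''` of `q` is an `a`-successor of some `S`-successor `q'`, where
`a · s q'' ⊴ s q'`. Leastness of `t` then bounds `t id` by this sum at `S = id`, which is `s q`.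
-/

theorem Finset.sum_eq_sup {ι K : Type*} [IdemSemiring K] (s : Finset ι) (f : ι → K) :
    ∑ i ∈ s, f i = s.sup f := by
  classical
  induction s using Finset.induction_on with
  | empty => exact bot_eq_zero.symm
  | insert i s hi ih => rw [Finset.sum_insert hi, Finset.sup_insert, ih, add_eq_sup]

theorem kle.trans {α : Type*} {e f g : RegularExpression α} (hef : kle.{u} e f)
    (hfg : kle.{u} f g) : kle.{u} e g :=
  fun K _ h => (hef K h).trans (hfg K h)

theorem interp_list_sum {α K : Type*} [KleeneAlgebra K] (h : α → K)
    (l : List (RegularExpression α)) : interp h l.sum = (l.map (interp h)).sum := by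
  induction l with
  | nil => rfl
  | cons e l ih => rw [List.sum_cons, List.map_cons, List.sum_cons, ← ih]; rfl

section ImageSum

variable {α Q : Type*} [Fintype Q]

-- `RegularExpression α` is syntax, not an additive monoid: the sum is taken along a list.
open Classical in
noncomputable def imageSum (s : Q → RegularExpression α) (S : Q → Q → Prop) (q : Q) :
    RegularExpression α :=
  (({q' | S q q'} : Finset Q).toList.map s).sum

open Classical in
theorem interp_imageSum {K : Type*} [KleeneAlgebra K] (h : α → K) (s : Q → RegularExpression α)
    (S : Q → Q → Prop) (q : Q) :
    interp h (imageSum s S q) = ∑ q' ∈ {q' | S q q'}, interp h (s q') := by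
  rw [imageSum, interp_list_sum, List.map_map, Finset.sum_map_toList, Function.comp_def]

theorem le_interp_imageSum {K : Type*} [KleeneAlgebra K] (h : α → K)
    (s : Q → RegularExpression α) {S : Q → Q → Prop} {q q' : Q} (hS : S q q') :
    interp h (s q') ≤ interp h (imageSum s S q) := by
  classical
  rw [interp_imageSum]
  exact Finset.single_le_sum_of_canonicallyOrdered (f := fun q' => interp h (s q'))
    (Finset.mem_filter.mpr ⟨Finset.mem_univ _, hS⟩)

theorem interp_imageSum_le {K : Type*} [KleeneAlgebra K] (h : α → K)
    (s : Q → RegularExpression α) {S : Q → Q → Prop} {q : Q} {c : K}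
    (hc : ∀ q', S q q' → interp h (s q') ≤ c) : interp h (imageSum s S q) ≤ c := by
  classical
  rw [interp_imageSum, Finset.sum_eq_sup]
  exact Finset.sup_le fun q' hq' => hc q' (Finset.mem_filter.mp hq').2

theorem mul_interp_imageSum_le {K : Type*} [KleeneAlgebra K] (h : α → K)
    (s : Q → RegularExpression α) {S : Q → Q → Prop} {q : Q} {x c : K}
    (hc : ∀ q', S q q' → x * interp h (s q') ≤ c) : x * interp h (imageSum s S q) ≤ c := by
  classical
  rw [interp_imageSum, Finset.mul_sum, Finset.sum_eq_sup]
  exact Finset.sup_le fun q' hq' => hc q' (Finset.mem_filter.mp hq').2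

theorem relSolution_imageSum {A : NFA α Q} {s : Q → RegularExpression α}
    (hs : AutSolution.{u} A s) {R : Q → Q → Prop} {q qf : Q} (hqf : qf ∈ A.accept)
    (hR : R q qf) : RelSolution.{u} A R (imageSum s · q) := by
  refine ⟨fun K _ h => (hs.1 qf hqf K h).trans (le_interp_imageSum h s hR), fun S a K _ h => ?_⟩
  refine mul_interp_imageSum_le h s fun q'' ⟨q', hSq', hstep⟩ => ?_
  exact (hs.2 q' a q'' hstep K h).trans (le_interp_imageSum h s hSq')

theorem imageSum_id_kle (s : Q → RegularExpression α) (q : Q) :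
    kle.{u} (imageSum s Eq q) (s q) := fun _ _ h =>
  interp_imageSum_le h s fun _ hq' => hq' ▸ le_rfl

end ImageSum

/-- If `R` relates `q` to an accepting state, then the least solution of the transformation
automaton `A[R]` at `id` is below the least solution of `A` at `q`. -/
theorem transformation_solution_below {α : Type*} {Q : Type*} [Finite Q]
    (A : NFA α Q) (q qf : Q) (hqf : qf ∈ A.accept) (R : Q → Q → Prop) (hR : R q qf)
    (t : (Q → Q → Prop) → RegularExpression α) (ht : LeastRelSolution.{u} A R t)
    (s : Q → RegularExpression α) (hs : LeastAutSolution.{u} A s) :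
    kle.{u} (t Eq) (s q) := by
  have := Fintype.ofFinite Q
  exact (ht.2 _ (relSolution_imageSum hs.1 hqf hR) Eq).trans (imageSum_id_kle s q)
end

section
/- Let e be a regular expression over α. (1) If e is nullable (ε ∈ matches' e), then 1 ⊴ e. (2) For every a ∈ α and every e' ∈ ∂(e, a) (the Antimirov derivative), char a * e' ⊴ e. -/
universe u

/-- The Antimirov derivative of a regular expression with respect to a letter. -/
def aderiv {α : Type*} : RegularExpression α → α → Set (RegularExpression α)
  | .zero, _ => ∅
  | .epsilon, _ => ∅
  | .char b, a => {f | a = b ∧ f = 1}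
  | .plus e f, a => aderiv e a ∪ aderiv f a
  | .comp e f, a =>
      (fun e' => e' * f) '' aderiv e a ∪ {f' | f' ∈ aderiv f a ∧ [] ∈ e.matches'}
  | .star e, a => (fun e' => e' * e.star) '' aderiv e a

/-!
Both parts go by induction on `e`. Part (2) rests on part (1) in exactly one case: a derivative
of `e * f` taken through `f` for nullable `e` satisfies `char a * e' ≤ f = 1 * f ≤ e * f`; for `e∗`
the bound comes from `e * e∗ ≤ e∗`.
-/

open scoped Computability

namespace RegularExpression

variable {α K : Type*} [KleeneAlgebra K] (h : α → K)

theorem one_le_interp_of_nil_mem_matches' {e : RegularExpression α} (hnil : [] ∈ e.matches') :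
    1 ≤ interp h e := by
  induction e with
  | zero => exact absurd hnil (Language.notMem_zero _)
  | epsilon => exact le_rfl
  | char b => exact absurd (Set.mem_singleton_iff.mp hnil) (List.cons_ne_nil b []).symm
  | plus e f ihe ihf =>
    rcases (Language.mem_add _ _ _).mp hnil with hnil | hnil
    · exact le_add_right (ihe hnil)
    · exact le_add_left (ihf hnil)
  | comp e f ihe ihf =>
    obtain ⟨x, hx, y, hy, hxy⟩ := Language.mem_mul.mp hnil
    obtain ⟨rfl, rfl⟩ := List.append_eq_nil_iff.mp hxy
    exact one_le_mul (ihe hx) (ihf hy)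
  | star e => exact one_le_kstar

theorem mul_interp_le_of_mem_aderiv {e e' : RegularExpression α} {a : α}
    (he' : e' ∈ aderiv e a) : h a * interp h e' ≤ interp h e := by
  induction e generalizing e' with
  | zero | epsilon => exact he'.elim
  | char b =>
    obtain ⟨rfl, rfl⟩ := he'
    exact (mul_one _).le
  | plus e f ihe ihf =>
    rcases he' with he' | he'
    · exact le_add_right (ihe he')
    · exact le_add_left (ihf he')
  | comp e f ihe ihf =>
    rcases he' with ⟨e₀, he₀, rfl⟩ | ⟨he', hnil⟩
    · calc h a * (interp h e₀ * interp h f) = h a * interp h e₀ * interp h f := (mul_assoc ..).symm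
        _ ≤ interp h e * interp h f := mul_le_mul_left (ihe he₀) _
    · exact (ihf he').trans (le_mul_of_one_le_left' (one_le_interp_of_nil_mem_matches' h hnil))
  | star e ihe =>
    obtain ⟨e₀, he₀, rfl⟩ := he'
    calc h a * (interp h e₀ * (interp h e)∗) = h a * interp h e₀ * (interp h e)∗ :=
          (mul_assoc ..).symm
      _ ≤ interp h e * (interp h e)∗ := mul_le_mul_left (ihe he₀) _
      _ ≤ (interp h e)∗ := mul_kstar_le_kstar

end RegularExpression

/-- (1) A nullable expression is provably above `1`; (2) each Antimirov derivative `e'` of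
`e` w.r.t. `a` satisfies `char a * e' ⊴ e`. -/
theorem nullable_and_deriv_le {α : Type*} (e : RegularExpression α) :
    ([] ∈ e.matches' → kle 1 e) ∧
    (∀ (a : α), ∀ e' ∈ aderiv e a, kle (RegularExpression.char a * e') e) :=
  ⟨fun hnil _ _ h => RegularExpression.one_le_interp_of_nil_mem_matches' h hnil,
    fun _ _ he' _ _ h => RegularExpression.mul_interp_le_of_mem_aderiv h he'⟩
end

section
/- For every regular expression e over α, every Kleene algebra K and every map h : α → K, the interpretation of e equals the sum of the interpretations of the elements of ι(e): ĥ e = ∑_{e' ∈ ι(e)} ĥ e'. -/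
universe u

/-- The initial states of the Antimirov automaton of a regular expression. -/
def ini {α : Type*} : RegularExpression α → Set (RegularExpression α)
  | .zero => ∅
  | .epsilon => {1}
  | .char a => {RegularExpression.char a}
  | .plus e f => ini e ∪ ini f
  | .comp e f => (fun e' => e' * f) '' ini e
  | .star e => (fun e' => e' * e.star) '' ini e ∪ {1}

/-!
Structural induction on `e`. Each clause of `ι` mirrors the corresponding clause of `ĥ`:
the union in the `e + f` case is harmless because `+` is idempotent, right multiplication
distributes over the finite sum in the `e * f` case, and the `e∗` case is the unfolding law
`a∗ = 1 + a * a∗`.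
-/

open scoped Computability

theorem finsum_mem_union_of_idem {ι M : Type*} [IdemSemiring M] {s t : Set ι}
    (hs : s.Finite) (ht : t.Finite) (f : ι → M) :
    ∑ᶠ x ∈ s ∪ t, f x = ∑ᶠ x ∈ s, f x + ∑ᶠ x ∈ t, f x := by
  classical
  rw [← finsum_mem_union_inter hs ht, eq_comm, add_eq_left_iff_le,
    ← (hs.union ht).coe_toFinset, ← (hs.inter_of_left t).coe_toFinset,
    finsum_mem_coe_finset, finsum_mem_coe_finset]
  exact Finset.sum_le_sum_of_subset
    (Set.Finite.toFinset_subset_toFinset.2 (Set.inter_subset_left.trans Set.subset_union_left))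

theorem RegularExpression.mul_left_injective {α : Type*} (f : RegularExpression α) :
    Function.Injective fun e : RegularExpression α => e * f :=
  fun _ _ h => by injection h

section

variable {α K : Type*} [KleeneAlgebra K] (h : α → K)

theorem ini_finite : ∀ e : RegularExpression α, (ini e).Finite
  | .zero => Set.finite_empty
  | .epsilon => Set.finite_singleton _
  | .char _ => Set.finite_singleton _
  | .plus e f => (ini_finite e).union (ini_finite f)
  | .comp e _ => (ini_finite e).image _
  | .star e => ((ini_finite e).image _).union (Set.finite_singleton _)

theorem finsum_ini_plus (e f : RegularExpression α) :
    ∑ᶠ x ∈ ini (e + f), interp h x = ∑ᶠ x ∈ ini e, interp h x + ∑ᶠ x ∈ ini f, interp h x :=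
  finsum_mem_union_of_idem (ini_finite e) (ini_finite f) _

theorem finsum_ini_mul (e f : RegularExpression α) :
    ∑ᶠ x ∈ ini (e * f), interp h x = (∑ᶠ x ∈ ini e, interp h x) * interp h f := by
  rw [finsum_mem_mul' _ _ (ini_finite e)]
  exact finsum_mem_image ((RegularExpression.mul_left_injective f).injOn)

theorem finsum_ini_star (e : RegularExpression α) :
    ∑ᶠ x ∈ ini e.star, interp h x = (∑ᶠ x ∈ ini e, interp h x) * (interp h e)∗ + 1 := by
  rw [ini, finsum_mem_union_of_idem ((ini_finite e).image _) (Set.finite_singleton _),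
    finsum_mem_image (RegularExpression.mul_left_injective _).injOn, finsum_mem_singleton,
    finsum_mem_mul' _ _ (ini_finite e)]
  rfl

end

/-- The interpretation of `e` is the sum of the interpretations of the elements of `ι(e)`. -/
theorem interp_eq_sum_ini {α : Type*} (e : RegularExpression α) :
    ∀ (K : Type*) [KleeneAlgebra K] (h : α → K),
      interp h e = ∑ᶠ e' ∈ ini e, interp h e' := by
  intro K _ h
  cases e with
  | zero => simp [ini, interp]
  | epsilon => simp [ini]
  | char _ => simp [ini]
  | plus e f =>
    rw [RegularExpression.plus_def, finsum_ini_plus, ← interp_eq_sum_ini e, ← interp_eq_sum_ini f]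
    rfl
  | comp e f =>
    rw [RegularExpression.comp_def, finsum_ini_mul, ← interp_eq_sum_ini e]
    rfl
  | star e =>
    rw [finsum_ini_star, ← interp_eq_sum_ini e, add_comm, one_add_mul_kstar]
    rfl
end

section
/- Let e be a regular expression over α and let A_e be its Antimirov automaton, the NFA with (finite) state set ρ(e), transition function the Antimirov derivative ∂, initial states ι(e), and accepting states the nullable expressions in ρ(e). If s : ρ(e) → RegularExpression α is a least solution to A_e, then ∑_{e' ∈ ι(e)} s(e') ⊴ e. -/
universe u

/-- The states of the Antimirov automaton of a regular expression. -/
def rho {α : Type*} : RegularExpression α → Set (RegularExpression α)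
  | .zero => ∅
  | .epsilon => {1}
  | .char a => {RegularExpression.char a, 1}
  | .plus e f => rho e ∪ rho f
  | .comp e f => (fun e' => e' * f) '' rho e ∪ rho f
  | .star e => (fun e' => e' * e.star) '' rho e ∪ {1}

/-- A solution to the Antimirov automaton `A_e`, whose states are the expressions in `ρ(e)`,
whose transitions are the Antimirov derivatives, and whose accepting states are the nullable
expressions in `ρ(e)`. -/
def AntimirovSolution {α : Type*} (e : RegularExpression α)
    (s : {f // f ∈ rho e} → RegularExpression α) : Prop :=
  (∀ f : {f // f ∈ rho e}, [] ∈ f.1.matches' → kle.{u} 1 (s f)) ∧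
  ∀ (f : {f // f ∈ rho e}) (a : α) (g : {f // f ∈ rho e}), g.1 ∈ aderiv f.1 a →
    kle.{u} (RegularExpression.char a * s g) (s f)

/-- A least solution to the Antimirov automaton of `e`. -/
def LeastAntimirovSolution {α : Type*} (e : RegularExpression α)
    (s : {f // f ∈ rho e} → RegularExpression α) : Prop :=
  AntimirovSolution.{u} e s ∧
  ∀ s' : {f // f ∈ rho e} → RegularExpression α, AntimirovSolution.{u} e s' →
    ∀ f, kle.{u} (s f) (s' f)

/-!
Interpretation is compatible with the Antimirov automaton: nullable expressions are interpreted
above `1`, `a · ĥ e'' ≤ ĥ e'` for `e'' ∈ ∂(e', a)`, and `ĥ e' ≤ ĥ e` for `e' ∈ ι(e)`. Hence the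
inclusion `ρ(e) → RegularExpression α` is a solution, leastness gives `s e' ⊴ e'`, and every
summand is below `e`.

The hypothesis only speaks about Kleene algebras in one universe, the conclusion about another.
This is bridged by noting that `ĥ e` and `ĥ f` lie in the Kleene subalgebra generated by the
finitely many letters of `e` and `f`; being the range of an interpretation over `Fin n`, it is
small and so has an isomorphic copy in every universe.
-/

open Computability

protected abbrev Equiv.kleeneAlgebra {T K : Type*} [KleeneAlgebra K] (ψ : T ≃ K) :
    KleeneAlgebra T := by
  let semiring := ψ.semiring
  let le := ψ.le
  let lt := ψ.lt
  let max := ψ.max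
  let bot : Bot T := ⟨ψ.symm ⊥⟩
  let kstar : KStar T := ⟨fun x => ψ.symm (ψ x)∗⟩
  apply ψ.injective.kleeneAlgebra <;> intros <;> first | rfl | exact ψ.apply_symm_apply _

protected abbrev Subsemiring.kleeneAlgebra {K : Type*} [KleeneAlgebra K] (S : Subsemiring K)
    (hS : ∀ x ∈ S, x∗ ∈ S) : KleeneAlgebra S := by
  let max : Max S := ⟨(· + ·)⟩
  let bot : Bot S := ⟨0⟩
  let kstar : KStar S := ⟨fun x => ⟨x∗, hS x x.2⟩⟩
  apply Subtype.val_injective.kleeneAlgebra <;> intros <;>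
    first | rfl | exact add_eq_sup _ _ | exact bot_eq_zero.symm

theorem RingHom.monotone_of_idemSemiring {A B : Type*} [IdemSemiring A] [IdemSemiring B]
    (φ : A →+* B) : Monotone φ := fun x y hxy => by
  rw [← add_eq_right_iff_le, ← map_add, add_eq_right_iff_le.2 hxy]

namespace RegularExpression

variable {α : Type*}

def letters : RegularExpression α → List α
  | zero => []
  | epsilon => []
  | char a => [a]
  | plus p q => p.letters ++ q.letters
  | comp p q => p.letters ++ q.letters
  | star p => p.letters

end RegularExpression

section Interp

variable {α K : Type*} [KleeneAlgebra K] (h : α → K)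

theorem interp_congr {h' : α → K} {x : RegularExpression α}
    (hx : ∀ a ∈ x.letters, h a = h' a) : interp h x = interp h' x := by
  induction x with
  | zero | epsilon => rfl
  | char a => exact hx a (List.mem_singleton_self a)
  | plus p q ihp ihq | comp p q ihp ihq =>
    simp only [RegularExpression.letters, List.mem_append] at hx
    simp only [interp, ihp fun a ha => hx a (.inl ha), ihq fun a ha => hx a (.inr ha)]
  | star p ihp => simp only [interp, ihp hx]

theorem RingHom.map_interp {L : Type*} [KleeneAlgebra L] (φ : K →+* L)
    (hφ : ∀ k, φ k∗ = (φ k)∗) (x : RegularExpression α) : φ (interp h x) = interp (φ ∘ h) x := by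
  induction x with
  | zero => exact map_zero φ
  | epsilon => exact map_one φ
  | char a => rfl
  | plus p q ihp ihq => simp only [interp, map_add, ihp, ihq]
  | comp p q ihp ihq => simp only [interp, map_mul, ihp, ihq]
  | star p ihp => simp only [interp, hφ, ihp]

def interpRange : Subsemiring K where
  carrier := Set.range (interp h)
  zero_mem' := ⟨0, rfl⟩
  one_mem' := ⟨1, rfl⟩
  add_mem' := by rintro _ _ ⟨x, rfl⟩ ⟨y, rfl⟩; exact ⟨x + y, rfl⟩
  mul_mem' := by rintro _ _ ⟨x, rfl⟩ ⟨y, rfl⟩; exact ⟨x * y, rfl⟩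

theorem kstar_mem_interpRange : ∀ k ∈ interpRange h, k∗ ∈ interpRange h := by
  rintro _ ⟨x, rfl⟩
  exact ⟨x.star, rfl⟩

end Interp

universe v w

theorem kle.interp_le {α : Type*} {e f : RegularExpression α} (hef : kle.{v} e f) {K : Type w}
    [KleeneAlgebra K] (h : α → K) : interp h e ≤ interp h f := by
  classical
  let L := e.letters ++ f.letters
  let S := interpRange (h ∘ L.get)
  have : Small.{v} S := show Small.{v} (Set.range (interp (h ∘ L.get))) from inferInstance
  let := S.kleeneAlgebra (kstar_mem_interpRange _)
  let ψ : Shrink.{v} S ≃ S := (equivShrink S).symm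
  let := ψ.kleeneAlgebra
  let φ : Shrink.{v} S →+* K := S.subtype.comp ψ.ringEquiv.toRingHom
  have hφ : ∀ k, φ k∗ = (φ k)∗ := fun _ => congrArg Subtype.val (ψ.apply_symm_apply _)
  have hL : ∀ a ∈ L, h a ∈ S := fun a ha => by
    obtain ⟨i, rfl⟩ := List.get_of_mem ha
    exact ⟨.char i, rfl⟩
  let h₀ : α → Shrink.{v} S := fun a => if ha : a ∈ L then ψ.symm ⟨h a, hL a ha⟩ else 0
  have hφh₀ : ∀ x : RegularExpression α, (∀ a ∈ x.letters, a ∈ L) →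
      φ (interp h₀ x) = interp h x := fun x hx =>
    (φ.map_interp h₀ hφ x).trans <| interp_congr _ fun a ha => by simp [φ, h₀, hx a ha]
  rw [← hφh₀ e fun a ha => List.mem_append_left _ ha,
    ← hφh₀ f fun a ha => List.mem_append_right _ ha]
  exact φ.monotone_of_idemSemiring (hef _ h₀)

section Antimirov

variable {α K : Type*} [KleeneAlgebra K] (h : α → K)

theorem one_le_interp_of_nil_mem {x : RegularExpression α} (hx : [] ∈ x.matches') :
    1 ≤ interp h x := by
  induction x with
  | zero => exact absurd hx (Language.notMem_zero _)
  | epsilon => exact le_rfl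
  | char a => exact absurd (Set.mem_singleton_iff.1 hx) (List.cons_ne_nil a []).symm
  | plus p q ihp ihq =>
    rcases hx with hp | hq
    · exact (ihp hp).trans le_self_add
    · exact (ihq hq).trans le_add_self
  | comp p q ihp ihq =>
    obtain ⟨u, hu, v, hv, huv⟩ := hx
    obtain ⟨rfl, rfl⟩ := List.append_eq_nil_iff.1 huv
    calc (1 : K) = 1 * 1 := (one_mul 1).symm
      _ ≤ interp h p * interp h q := mul_le_mul' (ihp hu) (ihq hv)
  | star p => exact one_le_kstar

theorem char_mul_interp_le_of_mem_aderiv {a : α} {x g : RegularExpression α}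
    (hg : g ∈ aderiv x a) : h a * interp h g ≤ interp h x := by
  induction x generalizing g with
  | zero | epsilon => exact absurd hg (Set.notMem_empty g)
  | char b =>
    obtain ⟨rfl, rfl⟩ := hg
    exact (mul_one _).le
  | plus p q ihp ihq =>
    rcases hg with hp | hq
    · exact (ihp hp).trans le_self_add
    · exact (ihq hq).trans le_add_self
  | comp p q ihp ihq =>
    rcases hg with ⟨p', hp', rfl⟩ | ⟨hq, hnull⟩
    · calc h a * (interp h p' * interp h q) = h a * interp h p' * interp h q :=
            (mul_assoc _ _ _).symm
        _ ≤ interp h p * interp h q := mul_le_mul_left (ihp hp') _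
    · calc h a * interp h g ≤ 1 * interp h q := (one_mul (interp h q)).symm ▸ ihq hq
        _ ≤ interp h p * interp h q := mul_le_mul_left (one_le_interp_of_nil_mem h hnull) _
  | star p ihp =>
    obtain ⟨p', hp', rfl⟩ := hg
    calc h a * (interp h p' * (interp h p)∗) = h a * interp h p' * (interp h p)∗ :=
          (mul_assoc _ _ _).symm
      _ ≤ interp h p * (interp h p)∗ := mul_le_mul_left (ihp hp') _
      _ ≤ (interp h p)∗ := mul_kstar_le_kstar

theorem interp_le_of_mem_ini {x g : RegularExpression α} (hg : g ∈ ini x) :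
    interp h g ≤ interp h x := by
  induction x generalizing g with
  | zero => exact absurd hg (Set.notMem_empty g)
  | epsilon | char b => obtain rfl := hg; exact le_rfl
  | plus p q ihp ihq =>
    rcases hg with hp | hq
    · exact (ihp hp).trans le_self_add
    · exact (ihq hq).trans le_add_self
  | comp p q ihp ihq =>
    obtain ⟨p', hp', rfl⟩ := hg
    exact mul_le_mul_left (ihp hp') _
  | star p ihp =>
    rcases hg with ⟨p', hp', rfl⟩ | rfl
    · exact (mul_le_mul_left (ihp hp') _).trans mul_kstar_le_kstar
    · exact one_le_kstar

end Antimirov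

theorem antimirovSolution_val {α : Type*} (e : RegularExpression α) :
    AntimirovSolution e Subtype.val :=
  ⟨fun _ hf _ _ h => one_le_interp_of_nil_mem h hf,
    fun _ _ _ hg _ _ h => char_mul_interp_le_of_mem_aderiv h hg⟩

/-- The least solution of the Antimirov automaton of `e`, summed over the initial states
`ι(e)`, is provably below `e`. -/
theorem antimirov_solution_le {α : Type*} (e : RegularExpression α)
    (s : {f // f ∈ rho e} → RegularExpression α)
    (hs : LeastAntimirovSolution e s) :
    ∀ (K : Type*) [KleeneAlgebra K] (h : α → K),
      ∑ᶠ f ∈ {f : {g // g ∈ rho e} | f.1 ∈ ini e}, interp h (s f) ≤ interp h e := by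
  intro K _ h
  refine finsum_mem_induction (· ≤ interp h e) zero_le (fun _ _ => add_le) ?_
  rintro f (hf : f.1 ∈ ini e)
  calc interp h (s f) ≤ interp h f.1 := (hs.2 _ (antimirovSolution_val e) f).interp_le h
    _ ≤ interp h e := interp_le_of_mem_ini h hf
end
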